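/- For greedy words c, d of length n, if ∑_{i=1}^n dᵢ/φⁱ ≥ ∑_{i=1}^n cᵢ/φⁱ then d ≥ c in the lexicographic order. -/
import Mathlib

noncomputable def phi : ℝ := (1 + Real.sqrt 5) / 2

/-- Value of a binary word in base φ. -/
noncomputable def val {n : ℕ} (c : Fin n → Fin 2) : ℝ :=
  ∑ i : Fin n, (c i : ℕ) / phi ^ ((i : ℕ) + 1)

/-- A binary word avoids the factor `011`. -/
def Greedy {n : ℕ} (c : Fin n → Fin 2) : Prop :=
  ∀ i j k : Fin n, (j : ℕ) = (i : ℕ) + 1 → (k : ℕ) = (i : ℕ) + 2 →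
    ¬ (c i = 0 ∧ c j = 1 ∧ c k = 1)

lemma phi_gt_one : 1 < phi := by
  have h : (2:ℝ) < Real.sqrt 5 := by
    have := Real.sq_sqrt (by norm_num : (5:ℝ) ≥ 0)
    nlinarith [Real.sqrt_nonneg 5]
  unfold phi; linarith

lemma phi_pos : 0 < phi := lt_trans one_pos phi_gt_one

lemma phi_sq : phi ^ 2 = phi + 1 := by
  have := Real.sq_sqrt (by norm_num : (5:ℝ) ≥ 0)
  unfold phi; ring_nf; nlinarith [Real.sqrt_nonneg 5]

lemma phi_key (m : ℕ) : 1/phi^(m+1) + 1/phi^(m+2) = 1/phi^m := by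
  have h0 : phi ≠ 0 := ne_of_gt phi_pos
  field_simp
  linear_combination (-phi^(m*2) * phi) * phi_sq

lemma phi_pow_lt (m : ℕ) : 1/phi^(m+1) < 1/phi^m := by
  apply div_lt_div_of_pos_left one_pos (pow_pos phi_pos m)
  calc phi^m = phi^m * 1 := (mul_one _).symm
  _ < phi^m * phi := mul_lt_mul_of_pos_left phi_gt_one (pow_pos phi_pos m)
  _ = phi^(m+1) := by ring

/-- Tail bound: if no `11` occurs from position `m` on, the tail sum is `< 1/φ^m`. -/
lemma tail_lt (e : ℕ → ℕ) (he : ∀ j, e j ≤ 1) (n : ℕ) :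
    ∀ m, (∀ j, m ≤ j → ¬(e j = 1 ∧ e (j+1) = 1)) →
    ∑ j ∈ Finset.Ico m n, (e j : ℝ)/phi^(j+1) < 1/phi^m := by
  intro m
  induction' hk : n - m using Nat.strong_induction_on with k ih generalizing m
  intro h11
  subst hk
  by_cases hm : n ≤ m
  · rw [Finset.Ico_eq_empty (by omega)]
    simp [one_div, inv_pos, pow_pos phi_pos]
  · push_neg at hm
    rw [show Finset.Ico m n = insert m (Finset.Ico (m+1) n) by
      ext x; simp only [Finset.mem_Ico, Finset.mem_insert]; omega]
    rw [Finset.sum_insert (by simp)]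
    rcases Nat.le_one_iff_eq_zero_or_eq_one.mp (he m) with h0 | h1
    · rw [h0]
      simp only [Nat.cast_zero, zero_div, zero_add]
      have := ih (n - (m+1)) (by omega) (m+1) rfl
        (fun j hj => h11 j (by omega))
      exact this.trans (phi_pow_lt m)
    · rw [h1]
      by_cases hm1 : n ≤ m + 1
      · rw [Finset.Ico_eq_empty (by omega), Finset.sum_empty]
        simpa using phi_pow_lt m
      · push_neg at hm1
        have he1 : e (m+1) = 0 := by
          rcases Nat.le_one_iff_eq_zero_or_eq_one.mp (he (m+1)) with h | h
          · exact h
          · exact absurd ⟨h1, h⟩ (h11 m le_rfl)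
        rw [show Finset.Ico (m+1) n = insert (m+1) (Finset.Ico (m+2) n) by
          ext x; simp only [Finset.mem_Ico, Finset.mem_insert]; omega]
        rw [Finset.sum_insert (by simp), he1]
        simp only [Nat.cast_zero, zero_div, zero_add, Nat.cast_one]
        have := ih (n - (m+2)) (by omega) (m+2) rfl
          (fun j hj => h11 j (by omega))
        calc 1/phi^(m+1) + ∑ j ∈ Finset.Ico (m+2) n, (e j : ℝ)/phi^(j+1)
            < 1/phi^(m+1) + 1/phi^(m+2) := by linarith
          _ = 1/phi^m := phi_key m

/-- Extension of a word to ℕ by zeros. -/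
def eN {n : ℕ} (c : Fin n → Fin 2) : ℕ → ℕ :=
  fun j => if h : j < n then (c ⟨j, h⟩ : ℕ) else 0

lemma eN_le {n : ℕ} (c : Fin n → Fin 2) : ∀ j, eN c j ≤ 1 := by
  intro j; unfold eN; split
  · have := (c ⟨j, ‹_›⟩).isLt; omega
  · exact Nat.zero_le 1

lemma eN_fin {n : ℕ} (c : Fin n → Fin 2) (i : Fin n) : eN c i = (c i : ℕ) := by
  unfold eN; rw [dif_pos i.isLt]

lemma fin2_eq_one {x : Fin 2} (h : (x : ℕ) = 1) : x = 1 := by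
  fin_cases x <;> simp_all

lemma fin2_eq_zero {x : Fin 2} (h : (x : ℕ) = 0) : x = 0 := by
  fin_cases x <;> simp_all

lemma fin2_cases (x : Fin 2) : x = 0 ∨ x = 1 := by
  fin_cases x <;> simp

lemma val_eq {n : ℕ} (c : Fin n → Fin 2) :
    val c = ∑ j ∈ Finset.range n, (eN c j : ℝ)/phi^(j+1) := by
  rw [← Fin.sum_univ_eq_sum_range (fun j => (eN c j : ℝ)/phi^(j+1)) n]
  unfold val
  apply Finset.sum_congr rfl
  intro i _
  rw [eN_fin]

/-- A greedy word has no `11` after a zero. -/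
lemma greedy_no11 {n : ℕ} (c : Fin n → Fin 2) (hc : Greedy c) (i : ℕ)
    (hi : eN c i = 0) :
    ∀ j, i + 1 ≤ j → ¬(eN c j = 1 ∧ eN c (j+1) = 1) := by
  intro j
  induction' j using Nat.strong_induction_on with j ih
  rintro hj ⟨h1, h2⟩
  have hj1n : j + 1 < n := by
    by_contra hn
    unfold eN at h2; rw [dif_neg (by omega)] at h2; omega
  have hjn : j < n := by omega
  have hin : i < n := by omega
  have hci : c ⟨i, hin⟩ = 0 := by
    apply fin2_eq_zero; unfold eN at hi; rwa [dif_pos hin] at hi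
  have hcj : c ⟨j, hjn⟩ = 1 := by
    apply fin2_eq_one; unfold eN at h1; rwa [dif_pos hjn] at h1
  have hcj1 : c ⟨j+1, hj1n⟩ = 1 := by
    apply fin2_eq_one; unfold eN at h2; rwa [dif_pos hj1n] at h2
  rcases eq_or_lt_of_le hj with heq | hlt
  · exact hc ⟨i, hin⟩ ⟨j, hjn⟩ ⟨j+1, hj1n⟩ (by simp [← heq]) (by simp; omega)
      ⟨hci, hcj, hcj1⟩
  · -- j > i + 1
    have hj1 : j - 1 < n := by omega
    rcases Nat.le_one_iff_eq_zero_or_eq_one.mp (eN_le c (j-1)) with h0 | h1'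
    · -- 0 1 1 at j-1, j, j+1 : forbidden
      have hcm : c ⟨j-1, hj1⟩ = 0 := by
        apply fin2_eq_zero; unfold eN at h0; rwa [dif_pos hj1] at h0
      exact hc ⟨j-1, hj1⟩ ⟨j, hjn⟩ ⟨j+1, hj1n⟩ (by simp; omega) (by simp; omega)
        ⟨hcm, hcj, hcj1⟩
    · -- 1 1 at j-1, j : contradicts induction
      have := ih (j-1) (by omega) (by omega)
      apply this
      constructor
      · exact h1'
      · rw [show j - 1 + 1 = j by omega]; exact h1

theorem greedy_value_mono_lex {n : ℕ} (c d : Fin n → Fin 2)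
    (hc : Greedy c) (hd : Greedy d) (h : val c ≤ val d) :
    c = d ∨ ∃ i : Fin n, (∀ j : Fin n, j < i → c j = d j) ∧ c i < d i := by
  by_cases hcd : c = d
  · exact Or.inl hcd
  right
  have hne : (Finset.univ.filter (fun i : Fin n => c i ≠ d i)).Nonempty := by
    obtain ⟨i, hi⟩ := Function.ne_iff.mp hcd
    exact ⟨i, by simp [hi]⟩
  set i := (Finset.univ.filter (fun i : Fin n => c i ≠ d i)).min' hne with hidef
  have hi_mem : c i ≠ d i := by
    have := Finset.min'_mem _ hne
    simpa using this
  have hprefix : ∀ j : Fin n, j < i → c j = d j := by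
    intro j hj
    by_contra hne'
    have : i ≤ j := Finset.min'_le _ _ (by simp [hne'])
    exact absurd hj (not_lt.mpr this)
  refine ⟨i, hprefix, ?_⟩
  rcases fin2_cases (c i) with hc0 | hc1 <;> rcases fin2_cases (d i) with hd0 | hd1
  · exact absurd (hc0.trans hd0.symm) hi_mem
  · rw [hc0, hd1]; decide
  · -- c i = 1, d i = 0 : contradiction with val c ≤ val d
    exfalso
    set m := (i : ℕ) with hm
    have hmn : m < n := i.isLt
    have hsplit : ∀ e : Fin n → Fin 2,
        val e = (∑ j ∈ Finset.range m, (eN e j : ℝ)/phi^(j+1)) +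
          (eN e m : ℝ)/phi^(m+1) +
          ∑ j ∈ Finset.Ico (m+1) n, (eN e j : ℝ)/phi^(j+1) := by
      intro e
      rw [val_eq, Finset.range_eq_Ico,
        ← Finset.sum_Ico_consecutive (fun j => (eN e j : ℝ)/phi^(j+1))
          (Nat.zero_le (m+1)) (by omega : m+1 ≤ n),
        ← Finset.range_eq_Ico, Finset.sum_range_succ]
    have hpre : ∑ j ∈ Finset.range m, (eN c j : ℝ)/phi^(j+1) =
        ∑ j ∈ Finset.range m, (eN d j : ℝ)/phi^(j+1) := by
      apply Finset.sum_congr rfl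
      intro j hj
      rw [Finset.mem_range] at hj
      have hjn : j < n := by omega
      have : c ⟨j, hjn⟩ = d ⟨j, hjn⟩ := hprefix ⟨j, hjn⟩ (by simp [Fin.lt_def]; omega)
      unfold eN; rw [dif_pos hjn, dif_pos hjn, this]
    have hecm : eN c m = 1 := by
      unfold eN; rw [dif_pos hmn]
      have : (⟨m, hmn⟩ : Fin n) = i := by ext; simp [hm]
      rw [this, hc1]; rfl
    have hedm : eN d m = 0 := by
      unfold eN; rw [dif_pos hmn]
      have : (⟨m, hmn⟩ : Fin n) = i := by ext; simp [hm]
      rw [this, hd0]; rfl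
    have htd : ∑ j ∈ Finset.Ico (m+1) n, (eN d j : ℝ)/phi^(j+1) < 1/phi^(m+1) :=
      tail_lt (eN d) (eN_le d) n (m+1) (greedy_no11 d hd m hedm)
    have htc : (0:ℝ) ≤ ∑ j ∈ Finset.Ico (m+1) n, (eN c j : ℝ)/phi^(j+1) := by
      apply Finset.sum_nonneg
      intro j _
      exact div_nonneg (Nat.cast_nonneg _) (le_of_lt (pow_pos phi_pos _))
    have h1 := hsplit c
    have h2 := hsplit d
    rw [hecm] at h1
    rw [hedm] at h2
    push_cast at h1 h2
    rw [h1, h2, hpre] at h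
    rw [zero_div] at h
    linarith
  · rw [hc1, hd1] at hi_mem; exact absurd rfl hi_mem
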